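/- For every peak composition α of n, the multisets {Des(w_c(T)) : T ∈ SPIT(α)} and {Des(w_r(T)) : T ∈ SPIT(α)} are equal (as multisets of subsets of {1,…,n−1}). -/

import Mathlib

/-!
For a peak composition the peak-tableau condition only says that the second entry of a row is
smaller than the first entry of the next row, so the SPITs of shape `α` are the linear extensions
of the poset on `cd α` generated by `(i, j) < (i + 1, j)` and `(2, j) < (1, j + 1)`. Both
reading words read each row from left to right and read `(1, j + 1)` before `(2, j)`, so they
reverse the same covering relations. As in Stanley's theory of `(P, ω)`-partitions, a linear
extension `T` with descents in `S` is determined by its levels `blockIndex S ∘ T`, and the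
possible level functions are the maps that increase weakly along edges, strictly along reversed
ones, with prescribed level sizes: a description that does not see the reading order. Thus both
readings give equally many SPITs with descent set inside any `S`, and Möbius inversion over
subsets gives equality for each descent set.
-/

namespace PaperSPIT

/-- The `j`-th part (1-indexed) of a composition presented as a list. -/
def part (α : List ℕ) (j : ℕ) : ℕ := α.getD (j - 1) 0

/-- The largest part. -/
def maxPart (α : List ℕ) : ℕ := α.foldr max 0

/-- The composition diagram: boxes `(i, j)` (column `i`, row `j`), both 1-indexed,
rows numbered from bottom to top. -/
def cd (α : List ℕ) : Finset (ℕ × ℕ) :=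
  (Finset.Icc 1 (maxPart α) ×ˢ Finset.Icc 1 α.length).filter fun p => p.1 ≤ part α p.2

/-- `α` is a composition of `n`. -/
def IsComposition (n : ℕ) (α : List ℕ) : Prop :=
  (∀ a ∈ α, 0 < a) ∧ α.sum = n

/-- `α` is a peak composition of `n`: all parts except possibly the last are `> 1`. -/
def IsPeakComposition (n : ℕ) (α : List ℕ) : Prop :=
  IsComposition n α ∧ ∀ i, i + 1 < α.length → 1 < α.getD i 0

/-- A standard filling of `cd α`: a bijection from the boxes onto `{1, …, n}`
(normalized to be `0` off the diagram). -/
def IsStandardFilling (α : List ℕ) (T : ℕ × ℕ → ℕ) : Prop :=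
  Set.BijOn T (cd α : Set (ℕ × ℕ)) (Set.Icc 1 α.sum) ∧
  ∀ p : ℕ × ℕ, p ∉ cd α → T p = 0

def RowsIncrease (α : List ℕ) (T : ℕ × ℕ → ℕ) : Prop :=
  ∀ i j : ℕ, (i, j) ∈ cd α → (i + 1, j) ∈ cd α → T (i, j) < T (i + 1, j)

def RowsWeaklyIncrease (α : List ℕ) (T : ℕ × ℕ → ℕ) : Prop :=
  ∀ i j : ℕ, (i, j) ∈ cd α → (i + 1, j) ∈ cd α → T (i, j) ≤ T (i + 1, j)

def FirstColIncreases (α : List ℕ) (T : ℕ × ℕ → ℕ) : Prop :=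
  ∀ j : ℕ, (1, j) ∈ cd α → (1, j + 1) ∈ cd α → T (1, j) < T (1, j + 1)

/-- Standard immaculate tableau. -/
def IsSIT (α : List ℕ) (T : ℕ × ℕ → ℕ) : Prop :=
  IsStandardFilling α T ∧ RowsIncrease α T ∧ FirstColIncreases α T

/-- Peak-tableau condition: for every `1 ≤ k ≤ n` the boxes with entries `≤ k`
form the diagram of a peak composition. -/
def PeakCond (α : List ℕ) (T : ℕ × ℕ → ℕ) : Prop :=
  ∀ k : ℕ, 1 ≤ k → k ≤ α.sum → ∃ β : List ℕ,
    IsPeakComposition k β ∧ (cd α).filter (fun p => T p ≤ k) = cd β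

/-- Standard peak immaculate tableau. -/
def IsSPIT (α : List ℕ) (T : ℕ × ℕ → ℕ) : Prop := IsSIT α T ∧ PeakCond α T

def SPITset (α : List ℕ) : Set (ℕ × ℕ → ℕ) := {T | IsSPIT α T}

/-- The Young triple condition. -/
def YoungTriple (α : List ℕ) (T : ℕ × ℕ → ℕ) : Prop :=
  ∀ k i j : ℕ, i < j → (k, j) ∈ cd α → (k + 1, i) ∈ cd α → T (k, j) ≤ T (k + 1, i) →
    (k + 1, j) ∈ cd α ∧ T (k + 1, j) < T (k + 1, i)

/-- Standard Young composition tableau. -/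
def IsSYCT (α : List ℕ) (T : ℕ × ℕ → ℕ) : Prop :=
  IsStandardFilling α T ∧ RowsIncrease α T ∧ FirstColIncreases α T ∧ YoungTriple α T

def SYCTset (α : List ℕ) : Set (ℕ × ℕ → ℕ) := {T | IsSYCT α T}

/-- Standard peak Young composition tableau. -/
def IsSPYCT (α : List ℕ) (T : ℕ × ℕ → ℕ) : Prop := IsSYCT α T ∧ PeakCond α T

def SPYCTset (α : List ℕ) : Set (ℕ × ℕ → ℕ) := {T | IsSPYCT α T}

/-- Row reading word `w_r`: rows from top to bottom, each row left to right. -/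
def wR (α : List ℕ) (T : ℕ × ℕ → ℕ) : List ℕ :=
  ((List.range α.length).reverse.map fun j =>
    (List.range (part α (j + 1))).map fun i => T (i + 1, j + 1)).flatten

/-- The `i`-th column of a filling, read bottom to top. -/
def colList (α : List ℕ) (T : ℕ × ℕ → ℕ) (i : ℕ) : List ℕ :=
  ((List.range α.length).filter fun j => decide (i ≤ part α (j + 1))).map
    fun j => T (i, j + 1)

/-- Column reading word `w_c`: columns left to right, each column bottom to top. -/
def wC (α : List ℕ) (T : ℕ × ℕ → ℕ) : List ℕ :=
  ((List.range (maxPart α)).map fun i => colList α T (i + 1)).flatten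

/-- Young reading word `w_Y`: first column top to bottom, then subsequent columns
bottom to top, columns left to right. -/
def wY (α : List ℕ) (T : ℕ × ℕ → ℕ) : List ℕ :=
  (colList α T 1).reverse ++
    ((List.range (maxPart α - 1)).map fun i => colList α T (i + 2)).flatten

/-- Descent set of a word with distinct letters: `i` such that `i` and `i+1` occur
and `i` occurs to the right of `i+1`. -/
def DesWord (w : List ℕ) : Finset ℕ :=
  w.toFinset.filter fun i => (i + 1) ∈ w ∧ w.idxOf (i + 1) < w.idxOf i

open Finset

section Rank

variable {ι β : Type*} [DecidableEq ι] [LinearOrder β] {s : Finset ι} {key : ι → β}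
  {p q : ι}

def rankFill (s : Finset ι) (key : ι → β) (p : ι) : ℕ :=
  if p ∈ s then #(s.filter fun q => key q < key p) + 1 else 0

lemma rankFill_of_notMem (hp : p ∉ s) : rankFill s key p = 0 := if_neg hp

lemma rankFill_lt_rankFill (hp : p ∈ s) (hq : q ∈ s) (h : key p < key q) :
    rankFill s key p < rankFill s key q := by
  simp only [rankFill, if_pos hp, if_pos hq, add_lt_add_iff_right]
  refine card_lt_card ((ssubset_iff_of_subset fun r hr => ?_).2 ⟨p, ?_, ?_⟩)
  · simp only [mem_filter] at hr ⊢
    exact ⟨hr.1, hr.2.trans h⟩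
  · exact mem_filter.2 ⟨hp, h⟩
  · simp

lemma rankFill_bijOn (hkey : Set.InjOn key s) :
    Set.BijOn (rankFill s key) s (Set.Icc 1 #s) := by
  have hmaps : Set.MapsTo (rankFill s key) s (Icc 1 #s : Finset ℕ) := by
    intro p hp
    have hsub : (s.filter fun q => key q < key p) ⊆ s.erase p :=
      fun q hq => mem_erase.2 ⟨fun h => by simp [h] at hq, (mem_filter.1 hq).1⟩
    have := card_le_card hsub
    rw [card_erase_of_mem hp] at this
    have : 0 < #s := card_pos.2 ⟨p, hp⟩
    simp only [rankFill, if_pos (mem_coe.1 hp), coe_Icc, Set.mem_Icc]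
    omega
  have hinj : Set.InjOn (rankFill s key) s := by
    intro p hp q hq h
    by_contra hne
    rcases lt_or_gt_of_ne (fun h' => hne (hkey hp hq h')) with h' | h'
    · exact (rankFill_lt_rankFill hp hq h').ne h
    · exact (rankFill_lt_rankFill hq hp h').ne' h
  rw [← coe_Icc]
  exact ⟨hmaps, hinj, surjOn_of_injOn_of_card_le _ hmaps hinj (by simp)⟩

end Rank

section Bijection

variable {ι : Type*} {s : Finset ι} {T : ι → ℕ} {N : ℕ}

lemma card_filter_comp_of_bijOn {t : Finset ℕ} (hT : Set.BijOn T s t) (P : ℕ → Prop)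
    [DecidablePred P] : #(s.filter fun p => P (T p)) = #(t.filter P) := by
  refine card_nbij T (fun p hp => ?_) (fun p hp q hq h => hT.injOn (mem_filter.1 hp).1
    (mem_filter.1 hq).1 h) (fun v hv => ?_)
  · exact mem_filter.2 ⟨hT.mapsTo (mem_filter.1 hp).1, (mem_filter.1 hp).2⟩
  · obtain ⟨p, hp, rfl⟩ := hT.surjOn (mem_filter.1 hv).1
    exact ⟨p, mem_filter.2 ⟨hp, (mem_filter.1 hv).2⟩, rfl⟩

lemma card_filter_le_of_bijOn (hT : Set.BijOn T s (Set.Icc 1 N)) {k : ℕ} (hk : k ≤ N) :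
    #(s.filter fun q => T q ≤ k) = k := by
  rw [← coe_Icc] at hT
  rw [card_filter_comp_of_bijOn hT (· ≤ k),
    show (Icc 1 N).filter (· ≤ k) = Icc 1 k by
      ext; simp only [mem_filter, mem_Icc]; omega]
  simp

lemma card_filter_lt_of_bijOn (hT : Set.BijOn T s (Set.Icc 1 N)) {k : ℕ} (hk : k ≤ N + 1) :
    #(s.filter fun q => T q < k) = k - 1 := by
  rw [← coe_Icc] at hT
  rw [card_filter_comp_of_bijOn hT (· < k),
    show (Icc 1 N).filter (· < k) = Ico 1 k by
      ext; simp only [mem_filter, mem_Icc, mem_Ico]; omega]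
  simp

lemma le_iff_le_card_filter_le {u g : ι → ℕ} (hu : Set.BijOn u s (Set.Icc 1 N))
    (hmono : ∀ p ∈ s, ∀ q ∈ s, g p < g q → u p < u q) {p : ι} (hp : p ∈ s) (b : ℕ) :
    g p ≤ b ↔ u p ≤ #(s.filter fun q => g q ≤ b) := by
  have hup := hu.mapsTo hp
  simp only [Set.mem_Icc] at hup
  constructor
  · intro hgp
    calc u p = #(s.filter fun q => u q ≤ u p) := (card_filter_le_of_bijOn hu hup.2).symm
      _ ≤ #(s.filter fun q => g q ≤ b) := by
        refine card_le_card fun q hq => ?_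
        simp only [mem_filter] at hq ⊢
        exact ⟨hq.1, by_contra fun h => (hmono p hp q hq.1 (by omega)).not_ge hq.2⟩
  · intro h
    by_contra! hgp
    have : #(s.filter fun q => g q ≤ b) ≤ #(s.filter fun q => u q < u p) := by
      refine card_le_card fun q hq => ?_
      simp only [mem_filter] at hq ⊢
      exact ⟨hq.1, hmono q hq.1 p hp (by omega)⟩
    rw [card_filter_lt_of_bijOn hu (by omega)] at this
    omega

end Bijection

section BlockIndex

variable {S : Finset ℕ} {u v w : ℕ}

/-- The index of the block containing `v` when `{1, 2, …}` is cut after every element of `S`. -/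
def blockIndex (S : Finset ℕ) (v : ℕ) : ℕ := #(S.filter (· < v))

@[simp] lemma blockIndex_zero : blockIndex S 0 = 0 := by simp [blockIndex]

lemma blockIndex_mono (h : v ≤ w) : blockIndex S v ≤ blockIndex S w :=
  card_le_card fun x hx => by
    simp only [mem_filter] at hx ⊢
    exact ⟨hx.1, by omega⟩

lemma blockIndex_lt_of_mem (hu : u ∈ S) (hvu : v ≤ u) (huw : u < w) :
    blockIndex S v < blockIndex S w := by
  refine card_lt_card ((ssubset_iff_of_subset fun x hx => ?_).2 ⟨u, ?_, ?_⟩)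
  · simp only [mem_filter] at hx ⊢
    exact ⟨hx.1, by omega⟩
  · exact mem_filter.2 ⟨hu, huw⟩
  · exact fun h => absurd (mem_filter.1 h).2 (by omega)

lemma blockIndex_succ_of_notMem (hv : v ∉ S) : blockIndex S (v + 1) = blockIndex S v := by
  refine le_antisymm (card_le_card fun x hx => ?_) (blockIndex_mono (by omega))
  simp only [mem_filter] at hx ⊢
  exact ⟨hx.1, lt_of_le_of_ne (by omega) fun h => hv (h ▸ hx.1)⟩

end BlockIndex

section LinearExtension

variable {ι : Type*} (s : Finset ι) (E : ι → ι → Prop)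

def IsLinearExtension (T : ι → ℕ) : Prop :=
  Set.BijOn T s (Set.Icc 1 #s) ∧ (∀ p ∉ s, T p = 0) ∧
    ∀ p ∈ s, ∀ q ∈ s, E p q → T p < T q

/-- `i` is a descent of `T` when the elements of `s` are read in increasing order of `pos`. -/
def IsDescent (pos T : ι → ℕ) (i : ℕ) : Prop :=
  ∃ p ∈ s, ∃ q ∈ s, T p = i ∧ T q = i + 1 ∧ pos q < pos p

/-- The level functions `g = blockIndex S ∘ T` of the linear extensions `T` whose descents lie
in `S`: a `(P, ω)`-partition with prescribed level sizes, where an edge `p → q` is strict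
exactly when `q` is read before `p`. -/
def IsBlockLabelling (pos : ι → ℕ) (S : Finset ℕ) (g : ι → ℕ) : Prop :=
  (∀ p ∉ s, g p = 0) ∧
  (∀ p ∈ s, ∀ q ∈ s, E p q → toLex (g p, pos p) < toLex (g q, pos q)) ∧
  ∀ b, #(s.filter fun p => g p ≤ b) = #((Icc 1 #s).filter fun v => blockIndex S v ≤ b)

variable {s E} {pos T g : ι → ℕ} {S : Finset ℕ} {p q : ι}

abbrev standardize [DecidableEq ι] (s : Finset ι) (pos g : ι → ℕ) : ι → ℕ :=
  rankFill s fun p => toLex (g p, pos p)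

lemma pos_lt_pos_of_succ (hpos : Set.InjOn pos s) (hdes : ∀ i, IsDescent s pos T i → i ∈ S)
    (hp : p ∈ s) (hq : q ∈ s) (hpq : T q = T p + 1) (hS : T p ∉ S) : pos p < pos q := by
  have hne : p ≠ q := by rintro rfl; omega
  refine (lt_or_gt_of_ne fun h => hne (hpos hp hq h)).resolve_right fun h => hS ?_
  exact hdes _ ⟨p, hp, q, hq, rfl, hpq, h⟩

lemma pos_lt_pos_of_blockIndex_eq (hT : Set.BijOn T s (Set.Icc 1 #s)) (hpos : Set.InjOn pos s)
    (hdes : ∀ i, IsDescent s pos T i → i ∈ S) (hp : p ∈ s) (hq : q ∈ s) (hlt : T p < T q)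
    (hblk : blockIndex S (T p) = blockIndex S (T q)) : pos p < pos q := by
  obtain ⟨d, hd⟩ : ∃ d, T q = T p + d + 1 := ⟨T q - T p - 1, by omega⟩
  have hcut : ∀ u, T p ≤ u → u < T q → u ∉ S := fun u h1 h2 hu =>
    (blockIndex_lt_of_mem hu h1 h2).ne hblk
  clear hblk hlt
  induction d generalizing q with
  | zero => exact pos_lt_pos_of_succ hpos hdes hp hq hd (hcut _ le_rfl (by omega))
  | succ d ih =>
    have hTq := hT.mapsTo hq
    simp only [Set.mem_Icc] at hTq
    obtain ⟨r, hr, hTr⟩ := hT.surjOn (show T p + d + 1 ∈ Set.Icc 1 #s by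
      simp only [Set.mem_Icc]; omega)
    exact (ih hr hTr fun u h1 h2 => hcut u h1 (by omega)).trans
      (pos_lt_pos_of_succ hpos hdes hr hq (by omega) (hcut _ (by omega) (by omega)))

lemma toLex_lt_toLex_iff_lt (hT : Set.BijOn T s (Set.Icc 1 #s)) (hpos : Set.InjOn pos s)
    (hdes : ∀ i, IsDescent s pos T i → i ∈ S) (hp : p ∈ s) (hq : q ∈ s) :
    toLex (blockIndex S (T p), pos p) < toLex (blockIndex S (T q), pos q) ↔ T p < T q := by
  have key : ∀ p ∈ s, ∀ q ∈ s, T p < T q →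
      toLex (blockIndex S (T p), pos p) < toLex (blockIndex S (T q), pos q) := by
    intro p hp q hq h
    simp only [Prod.Lex.toLex_lt_toLex]
    rcases (blockIndex_mono (S := S) h.le).lt_or_eq with hb | hb
    · exact Or.inl hb
    · exact Or.inr ⟨hb, pos_lt_pos_of_blockIndex_eq hT hpos hdes hp hq h hb⟩
  refine ⟨fun h => ?_, key p hp q hq⟩
  rcases lt_trichotomy (T p) (T q) with h' | h' | h'
  · exact h'
  · rw [hT.injOn hp hq h'] at h
    exact absurd h (lt_irrefl _)
  · exact absurd h (key q hq p hp h').not_gt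

lemma isBlockLabelling_blockIndex_comp (hT : IsLinearExtension s E T) (hpos : Set.InjOn pos s)
    (hdes : ∀ i, IsDescent s pos T i → i ∈ S) :
    IsBlockLabelling s E pos S fun p => blockIndex S (T p) := by
  refine ⟨fun p hp => ?_, fun p hp q hq hpq => ?_, fun b => ?_⟩
  · simp only [hT.2.1 p hp, blockIndex_zero]
  · exact (toLex_lt_toLex_iff_lt hT.1 hpos hdes hp hq).2 (hT.2.2 p hp q hq hpq)
  · have hbij := hT.1
    rw [← coe_Icc] at hbij
    exact card_filter_comp_of_bijOn hbij (blockIndex S · ≤ b)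

lemma standardize_blockIndex_comp [DecidableEq ι] (hT : IsLinearExtension s E T)
    (hpos : Set.InjOn pos s) (hdes : ∀ i, IsDescent s pos T i → i ∈ S) :
    standardize s pos (fun p => blockIndex S (T p)) = T := by
  funext p
  by_cases hp : p ∈ s
  · have hfilter : (s.filter fun q => toLex (blockIndex S (T q), pos q)
        < toLex (blockIndex S (T p), pos p)) = s.filter fun q => T q < T p :=
      filter_congr fun q hq => toLex_lt_toLex_iff_lt hT.1 hpos hdes hq hp
    have hTp := hT.1.mapsTo hp
    simp only [Set.mem_Icc] at hTp
    rw [standardize, rankFill, if_pos hp, hfilter, card_filter_lt_of_bijOn hT.1 (by omega)]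
    omega
  · rw [standardize, rankFill_of_notMem hp, hT.2.1 p hp]

lemma injOn_toLex_of_injOn (hpos : Set.InjOn pos s) :
    Set.InjOn (fun p => toLex (g p, pos p)) s :=
  fun _ hp _ hq h => hpos hp hq (congrArg Prod.snd (toLex.injective h))

lemma isLinearExtension_standardize [DecidableEq ι] (hpos : Set.InjOn pos s)
    (hg : IsBlockLabelling s E pos S g) : IsLinearExtension s E (standardize s pos g) :=
  ⟨rankFill_bijOn (injOn_toLex_of_injOn hpos), fun _ => rankFill_of_notMem,
    fun p hp q hq hpq => rankFill_lt_rankFill hp hq (hg.2.1 p hp q hq hpq)⟩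

lemma blockIndex_standardize [DecidableEq ι] (hpos : Set.InjOn pos s)
    (hg : IsBlockLabelling s E pos S g) (hp : p ∈ s) :
    blockIndex S (standardize s pos g p) = g p := by
  set T := standardize s pos g
  have hT : Set.BijOn T s (Set.Icc 1 #s) := rankFill_bijOn (injOn_toLex_of_injOn hpos)
  have hTp : T p ∈ Icc 1 #s := by simpa using hT.mapsTo hp
  have hiff : ∀ b, g p ≤ b ↔ blockIndex S (T p) ≤ b := fun b => by
    rw [le_iff_le_card_filter_le hT (fun p hp q hq h => rankFill_lt_rankFill hp hq
        (Prod.Lex.toLex_lt_toLex.2 (Or.inl h))) hp b, hg.2.2 b,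
      ← le_iff_le_card_filter_le (g := blockIndex S) (u := fun v => v)
        (by rw [coe_Icc]; exact Set.bijOn_id _)
        (fun v _ w _ h => lt_of_not_ge fun h' => (blockIndex_mono h').not_gt h) hTp b]
  exact le_antisymm ((hiff (g p)).1 le_rfl) ((hiff _).2 le_rfl)

lemma mem_of_isDescent_standardize [DecidableEq ι] (hpos : Set.InjOn pos s)
    (hg : IsBlockLabelling s E pos S g) {i : ℕ} (hi : IsDescent s pos (standardize s pos g) i) :
    i ∈ S := by
  obtain ⟨p, hp, q, hq, hTp, hTq, hqp⟩ := hi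
  by_contra hiS
  have hgpq : g q = g p := by
    rw [← blockIndex_standardize hpos hg hp, ← blockIndex_standardize hpos hg hq, hTp, hTq,
      blockIndex_succ_of_notMem hiS]
  have : standardize s pos g q < standardize s pos g p :=
    rankFill_lt_rankFill hq hp (Prod.Lex.toLex_lt_toLex.2 (Or.inr ⟨hgpq, hqp⟩))
  omega

theorem bijOn_blockIndex_comp [DecidableEq ι] (hpos : Set.InjOn pos s) :
    Set.BijOn (fun T p => blockIndex S (T p))
      {T | IsLinearExtension s E T ∧ ∀ i, IsDescent s pos T i → i ∈ S}
      {g | IsBlockLabelling s E pos S g} := by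
  refine ⟨fun T hT => isBlockLabelling_blockIndex_comp hT.1 hpos hT.2,
    fun T₁ h₁ T₂ h₂ h => ?_, fun g hg => ?_⟩
  · rw [← standardize_blockIndex_comp h₁.1 hpos h₁.2,
      ← standardize_blockIndex_comp h₂.1 hpos h₂.2]
    exact congrArg (standardize s pos) h
  · refine ⟨_, ⟨isLinearExtension_standardize hpos hg,
      fun _ => mem_of_isDescent_standardize hpos hg⟩, funext fun p => ?_⟩
    by_cases hp : p ∈ s
    · exact blockIndex_standardize hpos hg hp
    · simp only [standardize, rankFill_of_notMem hp, blockIndex_zero, hg.1 p hp]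

lemma isBlockLabelling_congr {pos' : ι → ℕ}
    (hE : ∀ p ∈ s, ∀ q ∈ s, E p q → (pos p < pos q ↔ pos' p < pos' q)) :
    IsBlockLabelling s E pos S g ↔ IsBlockLabelling s E pos' S g := by
  have : ∀ p ∈ s, ∀ q ∈ s, E p q → (toLex (g p, pos p) < toLex (g q, pos q) ↔
      toLex (g p, pos' p) < toLex (g q, pos' q)) := fun p hp q hq hpq => by
    simp only [Prod.Lex.toLex_lt_toLex, hE p hp q hq hpq]
  simp only [IsBlockLabelling]
  exact and_congr_right' (and_congr_left' (forall₂_congr fun p hp => forall₂_congr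
    fun q hq => forall_congr' fun hpq => this p hp q hq hpq))

theorem ncard_descent_subset_eq [DecidableEq ι] {pos' : ι → ℕ} (hpos : Set.InjOn pos s)
    (hpos' : Set.InjOn pos' s)
    (hE : ∀ p ∈ s, ∀ q ∈ s, E p q → (pos p < pos q ↔ pos' p < pos' q))
    (S : Finset ℕ) :
    {T | IsLinearExtension s E T ∧ ∀ i, IsDescent s pos T i → i ∈ S}.ncard =
      {T | IsLinearExtension s E T ∧ ∀ i, IsDescent s pos' T i → i ∈ S}.ncard := by
  rw [(bijOn_blockIndex_comp hpos).ncard_eq, (bijOn_blockIndex_comp hpos').ncard_eq]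
  congr 1
  ext g
  exact isBlockLabelling_congr hE

end LinearExtension

lemma finite_setOf_isLinearExtension {ι : Type*} (s : Finset ι) (E : ι → ι → Prop) :
    {T | IsLinearExtension s E T}.Finite := by
  refine Set.Finite.of_finite_image (f := fun T (p : s) => T p)
    ((Set.Finite.pi (t := fun _ => Set.Iic #s) fun _ => Set.finite_Iic _).subset ?_) ?_
  · rintro _ ⟨T, hT, rfl⟩
    exact Set.mem_univ_pi.2 fun p => (hT.1.mapsTo p.2).2
  · intro T₁ h₁ T₂ h₂ h
    funext p
    by_cases hp : p ∈ s
    · exact congrFun h ⟨p, hp⟩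
    · rw [h₁.2.1 p hp, h₂.2.1 p hp]

section Inversion

variable {γ β : Type*} {X : Set γ}

lemma ncard_sep_subset_eq_sum (hX : X.Finite) (f : γ → Finset β) (S : Finset β) :
    {x ∈ X | f x ⊆ S}.ncard = ∑ D ∈ S.powerset, {x ∈ X | f x = D}.ncard := by
  classical
  have hfin : ∀ (P : γ → Prop) [DecidablePred P],
      {x ∈ X | P x}.ncard = #(hX.toFinset.filter P) := fun P _ => by
    rw [← Set.ncard_coe_finset]
    congr 1
    ext
    simp
  rw [hfin, card_eq_sum_card_fiberwise (f := f) (t := S.powerset) fun x hx => ?_]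
  · refine sum_congr rfl fun D hD => ?_
    rw [hfin, filter_filter]
    exact congrArg card (filter_congr fun x _ =>
      ⟨And.right, fun h => ⟨h ▸ mem_powerset.1 hD, h⟩⟩)
  · exact mem_powerset.2 (mem_filter.1 hx).2

/-- Möbius inversion on the Boolean lattice of finite sets. -/
theorem ncard_sep_eq_of_forall_ncard_sep_subset_eq (hX : X.Finite) {f₁ f₂ : γ → Finset β}
    (h : ∀ S, {x ∈ X | f₁ x ⊆ S}.ncard = {x ∈ X | f₂ x ⊆ S}.ncard) (D : Finset β) :
    {x ∈ X | f₁ x = D}.ncard = {x ∈ X | f₂ x = D}.ncard := by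
  classical
  induction D using Finset.strongInduction with
  | H D ih =>
    have hsmaller : ∑ D' ∈ D.powerset.erase D, {x ∈ X | f₁ x = D'}.ncard =
        ∑ D' ∈ D.powerset.erase D, {x ∈ X | f₂ x = D'}.ncard :=
      sum_congr rfl fun D' hD' => by
        rw [mem_erase, mem_powerset] at hD'
        exact ih D' (hD'.2.ssubset_of_ne hD'.1)
    have := h D
    rw [ncard_sep_subset_eq_sum hX, ncard_sep_subset_eq_sum hX,
      ← sum_erase_add _ _ (mem_powerset_self D), ← sum_erase_add _ _ (mem_powerset_self D),
      hsmaller] at this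
    exact add_left_cancel this

end Inversion

section Diagram

variable {α : List ℕ} {i j : ℕ}

lemma le_maxPart {a : ℕ} (h : a ∈ α) : a ≤ maxPart α := by
  induction α with
  | nil => simp at h
  | cons b l ih =>
    rcases List.mem_cons.1 h with rfl | h
    · exact le_max_left _ _
    · exact (ih h).trans (le_max_right _ _)

lemma part_le_maxPart (h1 : 1 ≤ j) (h2 : j ≤ α.length) : part α j ≤ maxPart α := by
  rw [part, List.getD_eq_getElem _ _ (by omega)]
  exact le_maxPart (List.getElem_mem _)

lemma mem_cd :
    (i, j) ∈ cd α ↔ 1 ≤ i ∧ 1 ≤ j ∧ j ≤ α.length ∧ i ≤ part α j := by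
  simp only [cd, mem_filter, mem_product, mem_Icc]
  exact ⟨fun ⟨⟨⟨h1, _⟩, h3, h4⟩, h5⟩ => ⟨h1, h3, h4, h5⟩,
    fun ⟨h1, h3, h4, h5⟩ =>
      ⟨⟨⟨h1, h5.trans (part_le_maxPart h3 h4)⟩, h3, h4⟩, h5⟩⟩

lemma sum_eq_sum_part (α : List ℕ) : α.sum = ∑ j ∈ Icc 1 α.length, part α j := by
  rw [← Ico_add_one_right_eq_Icc, sum_Ico_eq_sum_range, Nat.add_sub_cancel,
    ← Fin.sum_univ_eq_sum_range, ← Fin.sum_univ_getElem]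
  refine sum_congr rfl fun t _ => ?_
  simp [part, add_comm 1]

lemma card_cd (α : List ℕ) : #(cd α) = α.sum := by
  rw [card_eq_sum_card_fiberwise (f := Prod.snd) (t := Icc 1 α.length) fun p hp => by
      obtain ⟨i, j⟩ := p
      simp only [coe_Icc, Set.mem_Icc, mem_coe, mem_cd] at hp ⊢
      omega, sum_eq_sum_part]
  refine sum_congr rfl fun j hj => ?_
  rw [show (cd α).filter (·.2 = j) = Icc 1 (part α j) ×ˢ {j} by
    ext ⟨a, b⟩
    simp only [mem_Icc] at hj
    simp only [mem_filter, mem_cd, mem_product, mem_Icc, mem_singleton]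
    constructor
    · rintro ⟨⟨h1, -, -, h4⟩, rfl⟩; exact ⟨⟨h1, h4⟩, rfl⟩
    · rintro ⟨⟨h1, h4⟩, rfl⟩; exact ⟨⟨h1, hj.1, hj.2, h4⟩, rfl⟩, card_product]
  simp

end Diagram

lemma eq_Icc_card_of_pred_mem {A : Finset ℕ} (hpos : ∀ a ∈ A, 1 ≤ a)
    (hpred : ∀ a, a + 1 ∈ A → 1 ≤ a → a ∈ A) : A = Icc 1 #A := by
  have hdown : ∀ b ∈ A, ∀ a, 1 ≤ a → a ≤ b → a ∈ A := by
    intro b hb a ha hab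
    induction b, hab using Nat.le_induction with
    | base => exact hb
    | succ b hab ih => exact ih (hpred b hb (ha.trans hab))
  suffices A = Icc 1 (A.sup id) by
    rw [this, Nat.card_Icc, Nat.add_sub_cancel, ← this]
  ext a
  simp only [mem_Icc]
  refine ⟨fun ha => ⟨hpos a ha, le_sup (f := id) ha⟩, fun ⟨h1, h2⟩ => ?_⟩
  rcases A.eq_empty_or_nonempty with rfl | hA
  · rw [sup_empty] at h2
    exact absurd h2 (by simp only [bot_eq_zero', nonpos_iff_eq_zero]; omega)
  obtain ⟨b, hb, hsup⟩ := exists_mem_eq_sup A hA id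
  rw [hsup] at h2
  exact hdown b hb a h1 h2

section Shape

variable {U : Finset (ℕ × ℕ)} {i j : ℕ}

def row (U : Finset (ℕ × ℕ)) (j : ℕ) : Finset ℕ := (U.filter (·.2 = j)).image Prod.fst

def firstCol (U : Finset (ℕ × ℕ)) : Finset ℕ := (U.filter (·.1 = 1)).image Prod.snd

@[simp] lemma mem_row : i ∈ row U j ↔ (i, j) ∈ U := by simp [row]

@[simp] lemma mem_firstCol : j ∈ firstCol U ↔ (1, j) ∈ U := by simp [firstCol]

def shape (U : Finset (ℕ × ℕ)) : List ℕ :=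
  (List.range #(firstCol U)).map fun t => #(row U (t + 1))

def IsJustified (U : Finset (ℕ × ℕ)) : Prop :=
  (∀ p ∈ U, 1 ≤ p.1 ∧ 1 ≤ p.2) ∧
    (∀ i j, (i + 1, j) ∈ U → 1 ≤ i → (i, j) ∈ U) ∧
    ∀ j, (1, j + 1) ∈ U → 1 ≤ j → (1, j) ∈ U

lemma IsJustified.row_eq (hU : IsJustified U) (j : ℕ) : row U j = Icc 1 #(row U j) :=
  eq_Icc_card_of_pred_mem (fun _ hi => (hU.1 _ (mem_row.1 hi)).1)
    fun i hi h1 => mem_row.2 (hU.2.1 i j (mem_row.1 hi) h1)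

lemma IsJustified.firstCol_eq (hU : IsJustified U) : firstCol U = Icc 1 #(firstCol U) :=
  eq_Icc_card_of_pred_mem (fun _ hj => (hU.1 _ (mem_firstCol.1 hj)).2)
    fun j hj h1 => mem_firstCol.2 (hU.2.2 j (mem_firstCol.1 hj) h1)

lemma IsJustified.mem_iff (hU : IsJustified U) :
    (i, j) ∈ U ↔ 1 ≤ i ∧ 1 ≤ j ∧ j ≤ #(firstCol U) ∧ i ≤ #(row U j) := by
  have hrow : ∀ i, i ∈ row U j ↔ 1 ≤ i ∧ i ≤ #(row U j) := fun i => by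
    rw [← mem_Icc, ← hU.row_eq]
  have hcol : ∀ j, j ∈ firstCol U ↔ 1 ≤ j ∧ j ≤ #(firstCol U) := fun j => by
    rw [← mem_Icc, ← hU.firstCol_eq]
  constructor
  · intro h
    have hi := (hrow i).1 (mem_row.2 h)
    have hj := (hcol j).1 (mem_firstCol.2 (mem_row.1 ((hrow 1).2 ⟨le_rfl, hi.1.trans hi.2⟩)))
    exact ⟨hi.1, hj.1, hj.2, hi.2⟩
  · rintro ⟨h1, -, -, h4⟩
    exact mem_row.1 ((hrow i).2 ⟨h1, h4⟩)

lemma length_shape : (shape U).length = #(firstCol U) := by simp [shape]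

lemma part_shape (h1 : 1 ≤ j) (h2 : j ≤ #(firstCol U)) : part (shape U) j = #(row U j) := by
  rw [part, List.getD_eq_getElem _ _ (by rw [length_shape]; omega)]
  simp only [shape, List.getElem_map, List.getElem_range, Nat.sub_add_cancel h1]

lemma IsJustified.cd_shape (hU : IsJustified U) : cd (shape U) = U := by
  ext ⟨i, j⟩
  rw [mem_cd, hU.mem_iff, length_shape]
  refine and_congr_right fun _ => and_congr_right fun h1 => and_congr_right fun h2 => ?_
  rw [part_shape h1 h2]

lemma IsJustified.isPeakComposition_shape (hU : IsJustified U)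
    (hpeak : ∀ j, (1, j + 1) ∈ U → 1 ≤ j → (2, j) ∈ U) :
    IsPeakComposition #U (shape U) := by
  have hfirst : ∀ j, 1 ≤ j → j ≤ #(firstCol U) → (1, j) ∈ U := fun j h1 h2 => by
    rw [← mem_firstCol, hU.firstCol_eq]
    exact mem_Icc.2 ⟨h1, h2⟩
  have hrow : ∀ i j, (i, j) ∈ U → i ≤ #(row U j) := fun i j h => by
    rw [← mem_row, hU.row_eq] at h
    exact (mem_Icc.1 h).2
  refine ⟨⟨fun a ha => ?_, by rw [← card_cd, hU.cd_shape]⟩, fun t ht => ?_⟩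
  · obtain ⟨t, ht, rfl⟩ := List.mem_map.1 ha
    exact hrow 1 _ (hfirst (t + 1) (by omega) (by simpa using ht))
  · rw [length_shape] at ht
    change 1 < part (shape U) (t + 1)
    rw [part_shape (by omega) (by omega)]
    exact hrow 2 _ (hpeak _ (hfirst (t + 2) (by omega) (by omega)) (by omega))

end Shape

def peakEdge (p q : ℕ × ℕ) : Prop := q = (p.1 + 1, p.2) ∨ (p.1 = 2 ∧ q = (1, p.2 + 1))

section Peak

variable {n : ℕ} {α : List ℕ} {T : ℕ × ℕ → ℕ} {i j : ℕ}

lemma mem_cd_of_succ_mem_cd (h : (i + 1, j) ∈ cd α) (hi : 1 ≤ i) : (i, j) ∈ cd α := by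
  rw [mem_cd] at h ⊢
  omega

lemma two_mem_cd_of_one_succ_mem_cd (hα : IsPeakComposition n α) (h : (1, j + 1) ∈ cd α)
    (hj : 1 ≤ j) : (2, j) ∈ cd α := by
  rw [mem_cd] at h ⊢
  have : 1 < α.getD (j - 1) 0 := hα.2 (j - 1) (by omega)
  exact ⟨by omega, hj, by omega, this⟩

lemma isStandardFilling_iff :
    IsStandardFilling α T ↔
      Set.BijOn T (cd α) (Set.Icc 1 #(cd α)) ∧ ∀ p ∉ cd α, T p = 0 := by
  rw [card_cd]
  rfl

lemma lt_of_peakCond (hT : IsStandardFilling α T) (hP : PeakCond α T) (h2 : (2, j) ∈ cd α)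
    (h1 : (1, j + 1) ∈ cd α) : T (2, j) < T (1, j + 1) := by
  have hk := hT.1.mapsTo h1
  obtain ⟨β, hβ, hU⟩ := hP _ hk.1 hk.2
  have h1β : (1, j + 1) ∈ cd β := hU ▸ mem_filter.2 ⟨h1, le_rfl⟩
  have h2β := two_mem_cd_of_one_succ_mem_cd hβ h1β (mem_cd.1 h2).2.1
  rw [← hU, mem_filter] at h2β
  exact h2β.2.lt_of_ne fun h => by simpa using hT.1.injOn h2 h1 h

lemma IsLinearExtension.firstColIncreases (hα : IsPeakComposition n α)
    (hT : IsLinearExtension (cd α) peakEdge T) : FirstColIncreases α T := by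
  intro j h1 h2
  have h21 := two_mem_cd_of_one_succ_mem_cd hα h2 (mem_cd.1 h1).2.1
  exact (hT.2.2 _ h1 _ h21 (Or.inl rfl)).trans (hT.2.2 _ h21 _ h2 (Or.inr ⟨rfl, rfl⟩))

lemma IsLinearExtension.peakCond (hα : IsPeakComposition n α)
    (hT : IsLinearExtension (cd α) peakEdge T) : PeakCond α T := by
  intro k _ hk2
  set U := (cd α).filter fun p => T p ≤ k
  have hU : IsJustified U := by
    refine ⟨fun ⟨i, j⟩ hp => ?_, fun i j h hi => ?_, fun j h hj => ?_⟩
    · have := mem_cd.1 (mem_filter.1 hp).1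
      exact ⟨this.1, this.2.1⟩
    · obtain ⟨h, hk⟩ := mem_filter.1 h
      have hij := mem_cd_of_succ_mem_cd h hi
      exact mem_filter.2 ⟨hij, (hT.2.2 _ hij _ h (Or.inl rfl)).le.trans hk⟩
    · obtain ⟨h, hk⟩ := mem_filter.1 h
      have h1j := mem_cd_of_succ_mem_cd (two_mem_cd_of_one_succ_mem_cd hα h hj) le_rfl
      exact mem_filter.2 ⟨h1j, (hT.firstColIncreases hα j h1j h).le.trans hk⟩
  have hcard : #U = k := card_filter_le_of_bijOn hT.1 (by rwa [card_cd])
  refine ⟨shape U, hcard ▸ hU.isPeakComposition_shape fun j h hj => ?_, hU.cd_shape.symm⟩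
  obtain ⟨h, hk⟩ := mem_filter.1 h
  have h2 := two_mem_cd_of_one_succ_mem_cd hα h hj
  exact mem_filter.2 ⟨h2, (hT.2.2 _ h2 _ h (Or.inr ⟨rfl, rfl⟩)).le.trans hk⟩

/-- For a peak composition the peak-tableau condition amounts to `T (2, j) < T (1, j + 1)`. -/
theorem isSPIT_iff_isLinearExtension (hα : IsPeakComposition n α) :
    IsSPIT α T ↔ IsLinearExtension (cd α) peakEdge T := by
  constructor
  · rintro ⟨⟨hT, hrow, -⟩, hP⟩
    obtain ⟨hbij, hzero⟩ := isStandardFilling_iff.1 hT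
    refine ⟨hbij, hzero, ?_⟩
    rintro ⟨i, j⟩ hp q hq (rfl | ⟨rfl, rfl⟩)
    · exact hrow i j hp hq
    · exact lt_of_peakCond hT hP hp hq
  · intro hT
    exact ⟨⟨isStandardFilling_iff.2 ⟨hT.1, hT.2.1⟩,
      fun i j hp hq => hT.2.2 _ hp _ hq (Or.inl rfl), hT.firstColIncreases hα⟩,
      hT.peakCond hα⟩

end Peak

section List

variable {ι κ : Type*} [BEq ι] [LawfulBEq ι] [BEq κ] [LawfulBEq κ] {l : List ι} {p q : ι}

lemma idxOf_map_of_injOn {f : ι → κ} (hf : Set.InjOn f {p | p ∈ l}) (hp : p ∈ l) :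
    (l.map f).idxOf (f p) = l.idxOf p := by
  induction l with
  | nil => simp at hp
  | cons a t ih =>
    have hf' : Set.InjOn f {p | p ∈ t} := fun x hx y hy => hf (List.mem_cons_of_mem a hx)
      (List.mem_cons_of_mem a hy)
    by_cases hpa : a = p
    · subst hpa
      simp
    · have hfa : f a ≠ f p := fun h => hpa (hf List.mem_cons_self hp h)
      rw [List.map_cons, List.idxOf_cons_ne _ hfa, List.idxOf_cons_ne _ hpa,
        ih hf' ((List.mem_cons.1 hp).resolve_left (Ne.symm hpa))]

lemma idxOf_lt_idxOf_of_pairwise {R : ι → ι → Prop} (hl : l.Pairwise R) (hp : p ∈ l)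
    (hq : q ∈ l) (hpq : R p q) (hqp : ¬ R q p) : l.idxOf p < l.idxOf q := by
  rcases lt_trichotomy (l.idxOf p) (l.idxOf q) with h | h | h
  · exact h
  · rw [List.idxOf_inj hp] at h
    exact absurd (h ▸ hpq) hqp
  · have := List.pairwise_iff_getElem.1 hl _ _ (List.idxOf_lt_length_iff.2 hq)
      (List.idxOf_lt_length_iff.2 hp) h
    simp only [List.getElem_idxOf] at this
    exact absurd this hqp

lemma injOn_idxOf : Set.InjOn l.idxOf {p | p ∈ l} := fun _ hp _ _ h => (List.idxOf_inj hp).1 h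

lemma mem_desWord_map_iff {T : ι → ℕ} (hT : Set.InjOn T {p | p ∈ l}) {i : ℕ} :
    i ∈ DesWord (l.map T) ↔
      ∃ p ∈ l, ∃ q ∈ l, T p = i ∧ T q = i + 1 ∧ l.idxOf q < l.idxOf p := by
  simp only [DesWord, mem_filter, List.mem_toFinset, List.mem_map]
  constructor
  · rintro ⟨⟨p, hp, rfl⟩, ⟨q, hq, hTq⟩, hlt⟩
    rw [← hTq, idxOf_map_of_injOn hT hp, idxOf_map_of_injOn hT hq] at hlt
    exact ⟨p, hp, q, hq, rfl, hTq, hlt⟩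
  · rintro ⟨p, hp, q, hq, rfl, hTq, hlt⟩
    refine ⟨⟨p, hp, rfl⟩, ⟨q, hq, hTq⟩, ?_⟩
    rwa [← hTq, idxOf_map_of_injOn hT hp, idxOf_map_of_injOn hT hq]

end List

section Reading

variable {α : List ℕ} {T : ℕ × ℕ → ℕ} {p q : ℕ × ℕ}

def rowReading (α : List ℕ) : List (ℕ × ℕ) :=
  ((List.range α.length).reverse.map fun j =>
    (List.range (part α (j + 1))).map fun i => (i + 1, j + 1)).flatten

def colReading (α : List ℕ) : List (ℕ × ℕ) :=
  ((List.range (maxPart α)).map fun i =>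
    ((List.range α.length).filter fun j => decide (i + 1 ≤ part α (j + 1))).map
      fun j => (i + 1, j + 1)).flatten

lemma wR_eq_map (α : List ℕ) (T : ℕ × ℕ → ℕ) : wR α T = (rowReading α).map T := by
  simp [wR, rowReading, List.map_flatten, Function.comp_def]

lemma wC_eq_map (α : List ℕ) (T : ℕ × ℕ → ℕ) : wC α T = (colReading α).map T := by
  simp [wC, colReading, colList, List.map_flatten, Function.comp_def]

lemma mem_rowReading : p ∈ rowReading α ↔ p ∈ cd α := by
  obtain ⟨a, b⟩ := p
  simp only [rowReading, List.mem_flatten, List.mem_map, List.mem_reverse, List.mem_range,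
    exists_exists_and_eq_and, Prod.mk.injEq, mem_cd]
  constructor
  · rintro ⟨j, hj, i, hi, rfl, rfl⟩
    omega
  · rintro ⟨h1, h2, h3, h4⟩
    exact ⟨b - 1, by omega, a - 1, by rw [Nat.sub_add_cancel h2]; omega, by omega, by omega⟩

lemma mem_colReading : p ∈ colReading α ↔ p ∈ cd α := by
  obtain ⟨a, b⟩ := p
  simp only [colReading, List.mem_flatten, List.mem_map, List.mem_range, List.mem_filter,
    decide_eq_true_eq, exists_exists_and_eq_and, Prod.mk.injEq]
  constructor
  · rintro ⟨i, hi, j, ⟨hj, hij⟩, rfl, rfl⟩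
    exact mem_cd.2 ⟨by omega, by omega, by omega, hij⟩
  · intro h
    obtain ⟨h1, h2, h3, h4⟩ := mem_cd.1 h
    refine ⟨a - 1, by have := part_le_maxPart h2 h3; omega, b - 1, ⟨by omega, ?_⟩, by omega,
      by omega⟩
    rwa [Nat.sub_add_cancel h1, Nat.sub_add_cancel h2]

lemma pairwise_rowReading :
    (rowReading α).Pairwise fun p q => q.2 < p.2 ∨ (p.2 = q.2 ∧ p.1 < q.1) := by
  rw [rowReading, List.pairwise_flatten, List.pairwise_map, List.pairwise_reverse]
  refine ⟨fun l hl => ?_, List.pairwise_lt_range.imp fun hab x hx y hy => ?_⟩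
  · obtain ⟨j, -, rfl⟩ := List.mem_map.1 hl
    exact List.pairwise_map.2 (List.pairwise_lt_range.imp fun h => Or.inr ⟨rfl, by omega⟩)
  · obtain ⟨i, -, rfl⟩ := List.mem_map.1 hx
    obtain ⟨i', -, rfl⟩ := List.mem_map.1 hy
    exact Or.inl (by simp only; omega)

lemma pairwise_colReading :
    (colReading α).Pairwise fun p q => p.1 < q.1 ∨ (p.1 = q.1 ∧ p.2 < q.2) := by
  rw [colReading, List.pairwise_flatten, List.pairwise_map]
  refine ⟨fun l hl => ?_, List.pairwise_lt_range.imp fun hab x hx y hy => ?_⟩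
  · obtain ⟨i, -, rfl⟩ := List.mem_map.1 hl
    exact List.pairwise_map.2 ((List.pairwise_lt_range.filter _).imp fun h =>
      Or.inr ⟨rfl, by omega⟩)
  · obtain ⟨j, -, rfl⟩ := List.mem_map.1 hx
    obtain ⟨j', -, rfl⟩ := List.mem_map.1 hy
    exact Or.inl (by simp only; omega)

end Reading

section Equidistribution

variable {n : ℕ} {α : List ℕ}

/-- Both reading orders read a row from left to right and read `(1, j + 1)` before `(2, j)`. -/
lemma idxOf_rowReading_lt_iff {p q : ℕ × ℕ} (hp : p ∈ cd α) (hq : q ∈ cd α)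
    (hpq : peakEdge p q) : (rowReading α).idxOf p < (rowReading α).idxOf q ↔
      (colReading α).idxOf p < (colReading α).idxOf q := by
  have hpR := mem_rowReading.2 hp
  have hqR := mem_rowReading.2 hq
  have hpC := mem_colReading.2 hp
  have hqC := mem_colReading.2 hq
  obtain ⟨i, j⟩ := p
  rcases hpq with rfl | ⟨h, rfl⟩
  · exact iff_of_true
      (idxOf_lt_idxOf_of_pairwise pairwise_rowReading hpR hqR (by simp) (by simp))
      (idxOf_lt_idxOf_of_pairwise pairwise_colReading hpC hqC (by simp) (by simp))
  · simp only at h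
    subst h
    exact iff_of_false
      (idxOf_lt_idxOf_of_pairwise pairwise_rowReading hqR hpR (by simp) (by simp)).not_gt
      (idxOf_lt_idxOf_of_pairwise pairwise_colReading hqC hpC (by simp) (by simp)).not_gt

lemma sep_desWord_map_subset_eq (hα : IsPeakComposition n α) {l : List (ℕ × ℕ)}
    (hl : ∀ p, p ∈ l ↔ p ∈ cd α) (S : Finset ℕ) :
    {T ∈ SPITset α | DesWord (l.map T) ⊆ S} =
      {T | IsLinearExtension (cd α) peakEdge T ∧
        ∀ i, IsDescent (cd α) l.idxOf T i → i ∈ S} := by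
  ext T
  simp only [SPITset, Set.mem_ofPred_eq, isSPIT_iff_isLinearExtension hα, subset_iff]
  refine and_congr_right fun hT => forall_congr' fun i => imp_congr_left ?_
  rw [mem_desWord_map_iff fun p hp q hq => hT.1.injOn ((hl p).1 hp) ((hl q).1 hq)]
  simp only [IsDescent, hl]

end Equidistribution

/-- For every peak composition `α` of `n`, the multisets
`{Des(w_c(T)) : T ∈ SPIT(α)}` and `{Des(w_r(T)) : T ∈ SPIT(α)}` coincide; equivalently,
every subset `D ⊆ {1,…,n−1}` occurs with the same multiplicity in both families. -/
theorem descent_equidistribution (n : ℕ) (α : List ℕ) (hα : IsPeakComposition n α)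
    (D : Finset ℕ) :
    {T ∈ SPITset α | DesWord (wC α T) = D}.ncard =
      {T ∈ SPITset α | DesWord (wR α T) = D}.ncard := by
  have hfin : (SPITset α).Finite := by
    convert finite_setOf_isLinearExtension (cd α) peakEdge using 1
    exact Set.ext fun T => isSPIT_iff_isLinearExtension hα
  refine ncard_sep_eq_of_forall_ncard_sep_subset_eq hfin (fun S => ?_) D
  simp only [wC_eq_map, wR_eq_map]
  rw [sep_desWord_map_subset_eq hα (fun _ => mem_colReading) S,
    sep_desWord_map_subset_eq hα (fun _ => mem_rowReading) S]
  exact ncard_descent_subset_eq (Set.InjOn.mono (fun _ => mem_colReading.2) injOn_idxOf)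
    (Set.InjOn.mono (fun _ => mem_rowReading.2) injOn_idxOf)
    (fun p hp q hq hpq => (idxOf_rowReading_lt_iff hp hq hpq).symm) S

end PaperSPIT
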